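/- arXiv:2501.19310 — 7 statements merged into one kernel-verified Lean document; each statement's English description precedes it below -/
import Mathlib

section
/- For any n ≥ 2, the set {x ∈ ℝ^n : x_i ≥ 0 for all i, and ∏ᵢ x_i ≥ 1} is strictly convex: for any two distinct points x, y in the set and any t ∈ (0,1), the point t·x + (1−t)·y satisfies ∏ᵢ (t·x + (1−t)·y)_i > 1. -/
/-!
On the open positive orthant, `log ∏ xᵢ = ∑ log xᵢ` and the right-hand side is strictly concave,
since `log` is strictly concave and two distinct points differ in some coordinate. A strictly
concave function exceeds, on an open segment, the minimum of its values at the endpoints; here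
both endpoint values are `≥ 0`.
-/

open Real Finset

variable {ι : Type*} [Fintype ι]

theorem pos_of_nonneg_of_one_le_prod {x : ι → ℝ} (hx₀ : ∀ i, 0 ≤ x i) (hx₁ : 1 ≤ ∏ i, x i)
    (i : ι) : 0 < x i := by
  refine (hx₀ i).lt_of_ne fun h => ?_
  rw [prod_eq_zero (mem_univ i) h.symm] at hx₁
  exact one_pos.not_ge hx₁

theorem strictConcaveOn_sum_log :
    StrictConcaveOn ℝ (Set.univ.pi fun _ : ι => Set.Ioi 0) (fun x => ∑ i, log (x i)) := by
  refine ⟨convex_pi fun _ _ => convex_Ioi 0, fun x hx y hy hxy a b ha hb hab => ?_⟩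
  simp only [Set.mem_univ_pi, Set.mem_Ioi] at hx hy
  obtain ⟨j, hj⟩ := Function.ne_iff.mp hxy
  simp only [Pi.add_apply, Pi.smul_apply, smul_eq_mul, mul_sum, ← sum_add_distrib]
  refine sum_lt_sum (fun i _ => ?_) ⟨j, mem_univ j, ?_⟩
  · exact strictConcaveOn_log_Ioi.concaveOn.2 (hx i) (hy i) ha.le hb.le hab
  · exact strictConcaveOn_log_Ioi.2 (hx j) (hy j) hj ha hb hab

theorem stmt_0_general (n : ℕ) (x y : Fin n → ℝ)
    (hx : (∀ i, 0 ≤ x i) ∧ 1 ≤ ∏ i, x i)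
    (hy : (∀ i, 0 ≤ y i) ∧ 1 ≤ ∏ i, y i)
    (hxy : x ≠ y) (t : ℝ) (ht : t ∈ Set.Ioo (0:ℝ) 1) :
    1 < ∏ i, (t * x i + (1 - t) * y i) := by
  have hxpos := pos_of_nonneg_of_one_le_prod hx.1 hx.2
  have hypos := pos_of_nonneg_of_one_le_prod hy.1 hy.2
  have hzpos (i : Fin n) : 0 < t * x i + (1 - t) * y i :=
    add_pos (mul_pos ht.1 (hxpos i)) (mul_pos (sub_pos.2 ht.2) (hypos i))
  have hsum_log_eq_log_prod {z : Fin n → ℝ} (hz : ∀ i, 0 < z i) :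
      ∑ i, log (z i) = log (∏ i, z i) :=
    (log_prod fun i _ => (hz i).ne').symm
  have hmin : 0 ≤ min (∑ i, log (x i)) (∑ i, log (y i)) := by
    rw [hsum_log_eq_log_prod hxpos, hsum_log_eq_log_prod hypos]
    exact le_min (log_nonneg hx.2) (log_nonneg hy.2)
  have hlt := strictConcaveOn_sum_log.lt_on_open_segment' (Set.mem_univ_pi.2 hxpos)
    (Set.mem_univ_pi.2 hypos) hxy ht.1 (sub_pos.2 ht.2) (add_sub_cancel t 1)
  simp only [Pi.add_apply, Pi.smul_apply, smul_eq_mul] at hlt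
  rw [hsum_log_eq_log_prod hzpos] at hlt
  exact (log_pos_iff (prod_pos fun i _ => hzpos i).le).1 (hmin.trans_lt hlt)

theorem stmt_0 (n : ℕ) (hn : 2 ≤ n) (x y : Fin n → ℝ)
    (hx : (∀ i, 0 ≤ x i) ∧ 1 ≤ ∏ i, x i)
    (hy : (∀ i, 0 ≤ y i) ∧ 1 ≤ ∏ i, y i)
    (hxy : x ≠ y) (t : ℝ) (ht : t ∈ Set.Ioo (0:ℝ) 1) :
    1 < ∏ i, (t * x i + (1 - t) * y i) :=
  stmt_0_general n x y hx hy hxy t ht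
end

section
/- Let a ∈ ℝ^n with a_i ≥ 0 for all i. If p ∈ ℝ^n with p_i > 0 for all i, ∏ᵢ p_i = 1, and λ ∈ ℝ satisfy p_i + λ·p_i⁻¹ = a_i for all i (the stationarity conditions), then λ > 0 if and only if ∏ᵢ a_i > 1. -/
lemma lt_add_mul_inv_self_iff {p lam : ℝ} (hp : 0 < p) : p < p + lam * p⁻¹ ↔ 0 < lam := by
  rw [lt_add_iff_pos_right, mul_pos_iff_of_pos_right (inv_pos.mpr hp)]

lemma Finset.prod_lt_prod_add_mul_inv_iff {ι : Type*} [Fintype ι] [Nonempty ι]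
    {a p : ι → ℝ} {lam : ℝ} (ha : ∀ i, 0 ≤ a i) (hp : ∀ i, 0 < p i)
    (hstat : ∀ i, p i + lam * (p i)⁻¹ = a i) :
    ∏ i, p i < ∏ i, a i ↔ 0 < lam := by
  have hlt : ∀ i, p i < a i ↔ 0 < lam := fun i => hstat i ▸ lt_add_mul_inv_self_iff (hp i)
  constructor
  · contrapose!
    intro hlam
    exact Finset.prod_le_prod (fun i _ => ha i) fun i _ => not_lt.mp ((hlt i).not.mpr hlam.not_gt)
  · intro hlam
    exact Finset.prod_lt_prod_of_nonempty (fun i _ => hp i) (fun i _ => (hlt i).mpr hlam)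
      Finset.univ_nonempty

theorem stmt_1 (n : ℕ) (hn : 2 ≤ n) (a p : Fin n → ℝ) (lam : ℝ)
    (ha : ∀ i, 0 ≤ a i) (hp : ∀ i, 0 < p i) (hprod : ∏ i, p i = 1)
    (hstat : ∀ i, p i + lam * (p i)⁻¹ = a i) :
    0 < lam ↔ 1 < ∏ i, a i := by
  have : Nonempty (Fin n) := ⟨⟨0, by omega⟩⟩
  rw [← hprod, Finset.prod_lt_prod_add_mul_inv_iff ha hp hstat]
end

section
/- Let a ∈ ℝ^n with nonnegative components. If every global minimizer of p ↦ ‖p − a‖² over sl(n) = {p ∈ ℝ^n : ∏ᵢ p_i = 1} had a strictly negative component, a contradiction arises; hence there exists a global minimizer p with p_i > 0 for all i. -/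
/-!
The squared distance to `a` is the squared Euclidean distance, so it has a minimizer on the
closed set `{p | ∏ i, p i = 1}`. Replacing a minimizer `p` by `|p|` keeps the product equal to
`|∏ i, p i| = 1`, and since `a ≥ 0` it moves no coordinate away from `a`; hence `|p|` is a
minimizer too, and its coordinates are nonzero because their product is `1`.
-/

open Finset

theorem IsClosed.exists_forall_dist_le {α : Type*} [PseudoMetricSpace α] [ProperSpace α]
    {s : Set α} (hs : IsClosed s) (hne : s.Nonempty) (x : α) :
    ∃ y ∈ s, ∀ z ∈ s, dist x y ≤ dist x z := by
  obtain ⟨y, hy, hxy⟩ := hs.exists_infDist_eq_dist hne x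
  exact ⟨y, hy, fun z hz => hxy ▸ Metric.infDist_le_dist_of_mem hz⟩

theorem sum_sq_sub_eq_dist_sq {ι : Type*} [Fintype ι] (p a : ι → ℝ) :
    ∑ i, (p i - a i) ^ 2 = dist (WithLp.toLp 2 p) (WithLp.toLp 2 a) ^ 2 := by
  rw [EuclideanSpace.dist_eq, Real.sq_sqrt (by positivity)]
  simp only [Real.dist_eq, sq_abs]

theorem IsClosed.exists_forall_sum_sq_sub_le {ι : Type*} [Fintype ι] {S : Set (ι → ℝ)}
    (hS : IsClosed S) (hne : S.Nonempty) (a : ι → ℝ) :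
    ∃ p ∈ S, ∀ q ∈ S, ∑ i, (p i - a i) ^ 2 ≤ ∑ i, (q i - a i) ^ 2 := by
  have hS' : IsClosed (WithLp.ofLp ⁻¹' S : Set (EuclideanSpace ℝ ι)) :=
    hS.preimage (PiLp.continuous_ofLp 2 _)
  obtain ⟨x, hx⟩ := hne
  obtain ⟨p, hp, hmin⟩ := hS'.exists_forall_dist_le ⟨WithLp.toLp 2 x, hx⟩ (WithLp.toLp 2 a)
  refine ⟨p.ofLp, hp, fun q hq => ?_⟩
  rw [sum_sq_sub_eq_dist_sq, sum_sq_sub_eq_dist_sq, dist_comm, dist_comm (WithLp.toLp 2 q)]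
  gcongr
  exact hmin _ hq

theorem isClosed_setOf_prod_eq_one {ι : Type*} [Fintype ι] :
    IsClosed {p : ι → ℝ | ∏ i, p i = 1} :=
  isClosed_eq (continuous_finsetProd _ fun i _ => continuous_apply i) continuous_const

theorem sq_abs_sub_le_sq_sub {x a : ℝ} (ha : 0 ≤ a) : (|x| - a) ^ 2 ≤ (x - a) ^ 2 := by
  nlinarith [le_abs_self x, sq_abs x]

theorem stmt_2_general (n : ℕ) (a : Fin n → ℝ) (ha : ∀ i, 0 ≤ a i) :
    ∃ p : Fin n → ℝ, (∏ i, p i) = 1 ∧ (∀ i, 0 < p i) ∧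
      ∀ q : Fin n → ℝ, (∏ i, q i) = 1 →
        ∑ i, (p i - a i)^2 ≤ ∑ i, (q i - a i)^2 := by
  obtain ⟨p, hp, hmin⟩ := isClosed_setOf_prod_eq_one.exists_forall_sum_sq_sub_le
    ⟨fun _ => 1, prod_const_one⟩ a
  replace hp : ∏ i, p i = 1 := hp
  have hp_ne : ∀ i, p i ≠ 0 := fun i hi =>
    zero_ne_one ((prod_eq_zero (mem_univ i) hi).symm.trans hp)
  refine ⟨fun i => |p i|, ?_, fun i => abs_pos.mpr (hp_ne i), fun q hq => ?_⟩
  · rw [← abs_prod, hp, abs_one]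
  · calc ∑ i, (|p i| - a i) ^ 2 ≤ ∑ i, (p i - a i) ^ 2 :=
          sum_le_sum fun i _ => sq_abs_sub_le_sq_sub (ha i)
      _ ≤ ∑ i, (q i - a i) ^ 2 := hmin q hq

theorem stmt_2 (n : ℕ) (hn : 2 ≤ n) (a : Fin n → ℝ) (ha : ∀ i, 0 ≤ a i) :
    ∃ p : Fin n → ℝ, (∏ i, p i) = 1 ∧ (∀ i, 0 < p i) ∧
      ∀ q : Fin n → ℝ, (∏ i, q i) = 1 →
        ∑ i, (p i - a i)^2 ≤ ∑ i, (q i - a i)^2 :=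
  stmt_2_general n a ha
end

section
/- Let a ∈ ℝ² with a_1 ≥ a_2 ≥ 0 and a_1·a_2 > 1. Then there is at most one point p with p_1 > p_2 > 0, p_1·p_2 = 1, that is a stationary point of the squared Euclidean distance to a, i.e., such that a = p + λ·p⁻¹ for some λ ∈ ℝ. -/
/-!
Writing a point of the hyperbola `x₁ x₂ = 1` as `(x, x⁻¹)`, stationarity for `a` with multiplier
`l` reads `a₁ x = x² + l`, `a₂ x = 1 + l x²`. Since `a₁ ≥ a₂`, the difference of these equations,
`(a₁ - a₂) x = (x² - 1)(1 - l)`, forces `l ≤ 1` when `x > 1`. Eliminating `l` shows that `x` is a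
root of `x⁴ - a₁ x³ + a₂ x - 1`; for two distinct roots `x, y > 1` the divided difference of this
quartic yields `l · y (x + y) = x y³ + 1 > y (x + y)`, i.e. `l > 1`.
-/

namespace Hyperbola

variable {a₁ a₂ x y l m : ℝ}

lemma one_lt_of_mul_eq_one (hlt : y < x) (hy : 0 < y) (hxy : x * y = 1) : 1 < x := by
  nlinarith

lemma stationary_equations (hxy : x * y = 1) (h₁ : a₁ = x + l * x⁻¹) (h₂ : a₂ = y + l * y⁻¹) :
    a₁ * x = x ^ 2 + l ∧ a₂ * x = 1 + l * x ^ 2 := by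
  have hx : x ≠ 0 := left_ne_zero_of_mul_eq_one hxy
  obtain rfl : y = x⁻¹ := eq_inv_of_mul_eq_one_right hxy
  subst h₁ h₂
  constructor <;> field_simp

lemma multiplier_le_one (ha : a₂ ≤ a₁) (hx : 1 < x)
    (h₁ : a₁ * x = x ^ 2 + l) (h₂ : a₂ * x = 1 + l * x ^ 2) : l ≤ 1 := by
  have hdiff : (x ^ 2 - 1) * (1 - l) = (a₁ - a₂) * x := by linear_combination h₂ - h₁
  have hpos : 0 < x ^ 2 - 1 := by nlinarith
  have : 0 ≤ (x ^ 2 - 1) * (1 - l) := hdiff ▸ mul_nonneg (sub_nonneg.mpr ha) (by linarith)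
  linarith [nonneg_of_mul_nonneg_right this hpos]

lemma multiplier_mul_eq_of_ne (hxy : x ≠ y)
    (hx₁ : a₁ * x = x ^ 2 + l) (hx₂ : a₂ * x = 1 + l * x ^ 2)
    (hy₁ : a₁ * y = y ^ 2 + m) (hy₂ : a₂ * y = 1 + m * y ^ 2) :
    l * (y * (x + y)) = x * y ^ 3 + 1 := by
  have hquartic : a₁ * (x ^ 2 + x * y + y ^ 2) - a₂ = (x + y) * (x ^ 2 + y ^ 2) := by
    refine mul_left_cancel₀ (sub_ne_zero.mpr hxy) ?_
    linear_combination x ^ 2 * hx₁ - hx₂ - y ^ 2 * hy₁ + hy₂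
  linear_combination x * hquartic - (x ^ 2 + x * y + y ^ 2) * hx₁ + hx₂

lemma one_lt_multiplier (hx : 1 < x) (hy : 1 < y) (hl : l * (y * (x + y)) = x * y ^ 3 + 1) :
    1 < l := by
  have hden : 0 < y * (x + y) := by positivity
  have : y * (x + y) < x * y ^ 3 + 1 := by
    nlinarith [mul_pos (show 0 < y ^ 2 - 1 by nlinarith) (show 0 < x * y - 1 by nlinarith)]
  by_contra! hle
  nlinarith [mul_le_mul_of_nonneg_right hle hden.le]

lemma eq_of_stationary (ha : a₂ ≤ a₁) (hx : 1 < x) (hy : 1 < y)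
    (hx₁ : a₁ * x = x ^ 2 + l) (hx₂ : a₂ * x = 1 + l * x ^ 2)
    (hy₁ : a₁ * y = y ^ 2 + m) (hy₂ : a₂ * y = 1 + m * y ^ 2) : x = y := by
  by_contra hxy
  have := one_lt_multiplier hx hy (multiplier_mul_eq_of_ne hxy hx₁ hx₂ hy₁ hy₂)
  linarith [multiplier_le_one ha hx hx₁ hx₂]

end Hyperbola

open Hyperbola in
theorem stmt_5_general (a₁ a₂ : ℝ) (ha : a₁ ≥ a₂)
    (p₁ p₂ q₁ q₂ : ℝ)
    (hp : p₁ > p₂ ∧ p₂ > 0 ∧ p₁ * p₂ = 1)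
    (hq : q₁ > q₂ ∧ q₂ > 0 ∧ q₁ * q₂ = 1)
    (hpstat : ∃ l : ℝ, a₁ = p₁ + l * p₁⁻¹ ∧ a₂ = p₂ + l * p₂⁻¹)
    (hqstat : ∃ l : ℝ, a₁ = q₁ + l * q₁⁻¹ ∧ a₂ = q₂ + l * q₂⁻¹) :
    p₁ = q₁ ∧ p₂ = q₂ := by
  obtain ⟨hp₁₂, hp₂, hpp⟩ := hp
  obtain ⟨hq₁₂, hq₂, hqq⟩ := hq
  obtain ⟨l, hl₁, hl₂⟩ := hpstat
  obtain ⟨m, hm₁, hm₂⟩ := hqstat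
  obtain ⟨hx₁, hx₂⟩ := stationary_equations hpp hl₁ hl₂
  obtain ⟨hy₁, hy₂⟩ := stationary_equations hqq hm₁ hm₂
  have hpq : p₁ = q₁ := eq_of_stationary ha (one_lt_of_mul_eq_one hp₁₂ hp₂ hpp)
    (one_lt_of_mul_eq_one hq₁₂ hq₂ hqq) hx₁ hx₂ hy₁ hy₂
  refine ⟨hpq, ?_⟩
  rw [eq_inv_of_mul_eq_one_right hpp, eq_inv_of_mul_eq_one_right hqq, hpq]

theorem stmt_5 (a₁ a₂ : ℝ) (ha : a₁ ≥ a₂) (ha2 : a₂ ≥ 0) (hprod : 1 < a₁ * a₂)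
    (p₁ p₂ q₁ q₂ : ℝ)
    (hp : p₁ > p₂ ∧ p₂ > 0 ∧ p₁ * p₂ = 1)
    (hq : q₁ > q₂ ∧ q₂ > 0 ∧ q₁ * q₂ = 1)
    (hpstat : ∃ l : ℝ, a₁ = p₁ + l * p₁⁻¹ ∧ a₂ = p₂ + l * p₂⁻¹)
    (hqstat : ∃ l : ℝ, a₁ = q₁ + l * q₁⁻¹ ∧ a₂ = q₂ + l * q₂⁻¹) :
    p₁ = q₁ ∧ p₂ = q₂ :=
  stmt_5_general a₁ a₂ ha p₁ p₂ q₁ q₂ hp hq hpstat hqstat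
end

section
/- The squared-distance functional in logarithmic coordinates, d(ξ) = ½ Σ_{i=1}^n (exp(ξ_i) − a_i)², is coercive on the hyperplane V = {ξ ∈ ℝ^n : Σᵢ ξ_i = 0}: for any sequence (ξ^k) in V with ‖ξ^k‖_∞ → ∞ one has d(ξ^k) → ∞. -/
/-!
If `∑ ξ i = 0`, the largest coordinate satisfies `‖ξ‖_∞ ≤ (n - 1) · max ξ`, so some
term `(exp ξ_j - a_j)²` is at least `(exp (‖ξ‖_∞ / (n - 1)) - ‖a‖_∞)²`, which tends to infinity
with `‖ξ‖_∞`.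
-/

open Filter Real

lemma exists_norm_le_mul_apply_of_sum_eq_zero {ι : Type*} [Fintype ι]
    (hι : 1 < Fintype.card ι) {ξ : ι → ℝ} (hξ : ∑ i, ξ i = 0) :
    ∃ j, ‖ξ‖ ≤ ((Fintype.card ι : ℝ) - 1) * ξ j := by
  have : Nonempty ι := Fintype.card_pos_iff.mp (by omega)
  obtain ⟨j, hj⟩ := Finite.exists_max ξ
  have hc : (2 : ℝ) ≤ Fintype.card ι := by exact_mod_cast hι
  have hgaps : ∑ k, (ξ j - ξ k) = Fintype.card ι * ξ j := by
    simp [Finset.sum_sub_distrib, hξ]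
  have hj_nonneg : 0 ≤ ξ j := by
    have : 0 ≤ ∑ k, (ξ j - ξ k) := Finset.sum_nonneg fun k _ => sub_nonneg.mpr (hj k)
    nlinarith
  refine ⟨j, pi_norm_le_iff_of_nonneg (by nlinarith) |>.mpr fun i => ?_⟩
  have hgap_i : ξ j - ξ i ≤ ∑ k, (ξ j - ξ k) :=
    Finset.single_le_sum (fun k _ => sub_nonneg.mpr (hj k)) (Finset.mem_univ i)
  -- `-ξ i ≤ (card ι - 1) * ξ j`: the gap `ξ j - ξ i` is one of the nonnegative gaps,
  -- which sum to `card ι * ξ j`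
  rw [Real.norm_eq_abs, abs_le]
  constructor <;> nlinarith [hj i]

lemma sq_exp_norm_div_sub_norm_le_sum_sq {ι : Type*} [Fintype ι]
    (hι : 1 < Fintype.card ι) (a : ι → ℝ) {ξ : ι → ℝ} (hξ : ∑ i, ξ i = 0)
    (h : ‖a‖ ≤ exp (‖ξ‖ / ((Fintype.card ι : ℝ) - 1))) :
    (exp (‖ξ‖ / ((Fintype.card ι : ℝ) - 1)) - ‖a‖) ^ 2 ≤ ∑ i, (exp (ξ i) - a i) ^ 2 := by
  have hc : (0 : ℝ) < (Fintype.card ι : ℝ) - 1 := by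
    have : (2 : ℝ) ≤ Fintype.card ι := by exact_mod_cast hι
    linarith
  obtain ⟨j, hj⟩ := exists_norm_le_mul_apply_of_sum_eq_zero hι hξ
  have hexp : exp (‖ξ‖ / ((Fintype.card ι : ℝ) - 1)) ≤ exp (ξ j) :=
    exp_le_exp.mpr <| (div_le_iff₀ hc).mpr (by linarith)
  have haj : a j ≤ ‖a‖ := (le_abs_self _).trans (norm_le_pi_norm a j)
  calc (exp (‖ξ‖ / ((Fintype.card ι : ℝ) - 1)) - ‖a‖) ^ 2
      ≤ (exp (ξ j) - a j) ^ 2 := pow_le_pow_left₀ (by linarith) (by linarith) 2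
    _ ≤ ∑ i, (exp (ξ i) - a i) ^ 2 :=
      Finset.single_le_sum (f := fun i => (exp (ξ i) - a i) ^ 2)
        (fun i _ => sq_nonneg _) (Finset.mem_univ j)

theorem stmt_11 (n : ℕ) (hn : 2 ≤ n) (a : Fin n → ℝ) :
    ∀ ξ : ℕ → Fin n → ℝ, (∀ k, ∑ i, ξ k i = 0) →
      Filter.Tendsto (fun k => ‖ξ k‖) Filter.atTop Filter.atTop →
      Filter.Tendsto (fun k => (1/2 : ℝ) * ∑ i, (Real.exp (ξ k i) - a i)^2)
        Filter.atTop Filter.atTop := by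
  intro ξ hsum hnorm
  have hcard : 1 < Fintype.card (Fin n) := by rw [Fintype.card_fin]; omega
  have hc : (0 : ℝ) < (Fintype.card (Fin n) : ℝ) - 1 := by
    have : (2 : ℝ) ≤ Fintype.card (Fin n) := by exact_mod_cast hcard
    linarith
  have hlow : Tendsto (fun k => exp (‖ξ k‖ / ((Fintype.card (Fin n) : ℝ) - 1)) - ‖a‖)
      atTop atTop :=
    tendsto_atTop_add_const_right _ _ (tendsto_exp_atTop.comp (hnorm.atTop_div_const hc))
  refine tendsto_atTop_mono' _ ?_
    (((tendsto_pow_atTop two_ne_zero).comp hlow).const_mul_atTop one_half_pos)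
  filter_upwards [hlow.eventually_ge_atTop 0] with k hk
  have := sq_exp_norm_div_sub_norm_le_sum_sq hcard a (hsum k) (sub_nonneg.mp hk)
  simp only [Function.comp_apply]
  gcongr
end

section
/- Let Σ ∈ ℝ^{n×n} be invertible diagonal and λ ∈ ℝ with λ ≠ Σ_i² for all i and Σ_{i=1}^n 1/(Σ_i² − λ) ≠ 0. Define S(X) = X − λΣ⁻¹XᵀΣ⁻¹. Then for any X with tr(Σ⁻¹X) = 0 one has S(X) ≠ Σ⁻¹. -/
/-!
Only the diagonal of `S(X) = Σ⁻¹` is needed: its `i`-th entry reads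
`Xᵢᵢ (1 - λ/σᵢ²) = 1/σᵢ`, i.e. `σᵢ⁻¹ Xᵢᵢ = 1/(σᵢ² - λ)`. Summing over `i` gives
`tr(Σ⁻¹X) = ∑ᵢ 1/(σᵢ² - λ) ≠ 0`.
-/

open Matrix

namespace Matrix

variable {ι K : Type*} [Fintype ι] [DecidableEq ι] [Field K]

theorem inv_diagonal_of_ne_zero {σ : ι → K} (hσ : ∀ i, σ i ≠ 0) :
    (diagonal σ)⁻¹ = diagonal σ⁻¹ :=
  inv_eq_right_inv <| by
    rw [diagonal_mul_diagonal, ← diagonal_one]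
    exact congrArg diagonal (funext fun i => mul_inv_cancel₀ (hσ i))

theorem trace_diagonal_mul (d : ι → K) (A : Matrix ι ι K) :
    (diagonal d * A).trace = ∑ i, d i * A i i := by
  simp only [trace, diag, diagonal_mul]

theorem inv_mul_diag_eq_of_sub_smul_eq_diagonal_inv {σ : ι → K} (hσ : ∀ i, σ i ≠ 0) {l : K}
    {X : Matrix ι ι K} (h : X - l • (diagonal σ⁻¹ * Xᵀ * diagonal σ⁻¹) = diagonal σ⁻¹)
    (i : ι) : (σ i)⁻¹ * X i i = (σ i ^ 2 - l)⁻¹ := by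
  have hii : X i i - l * ((σ i)⁻¹ * X i i * (σ i)⁻¹) = (σ i)⁻¹ := by
    simpa only [sub_apply, smul_apply, smul_eq_mul, mul_diagonal, diagonal_mul, transpose_apply,
      diagonal_apply_eq, Pi.inv_apply] using congrFun (congrFun h i) i
  refine eq_inv_of_mul_eq_one_left ?_
  calc (σ i)⁻¹ * X i i * (σ i ^ 2 - l)
      = σ i * (X i i - l * ((σ i)⁻¹ * X i i * (σ i)⁻¹)) := by field_simp [hσ i]
    _ = 1 := by rw [hii, mul_inv_cancel₀ (hσ i)]

end Matrix

theorem stmt_17_general (n : ℕ) (σ : Fin n → ℝ) (hσ : ∀ i, σ i ≠ 0) (l : ℝ)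
    (hsum : ∑ i, ((σ i)^2 - l)⁻¹ ≠ 0)
    (X : Matrix (Fin n) (Fin n) ℝ)
    (hX : ((Matrix.diagonal σ)⁻¹ * X).trace = 0) :
    X - l • ((Matrix.diagonal σ)⁻¹ * Xᵀ * (Matrix.diagonal σ)⁻¹)
      ≠ (Matrix.diagonal σ)⁻¹ := by
  rw [inv_diagonal_of_ne_zero hσ] at hX ⊢
  intro h
  rw [trace_diagonal_mul] at hX
  exact hsum (hX ▸ Finset.sum_congr rfl fun i _ =>
    (inv_mul_diag_eq_of_sub_smul_eq_diagonal_inv hσ h i).symm)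

theorem stmt_17 (n : ℕ) (σ : Fin n → ℝ) (hσ : ∀ i, σ i ≠ 0) (l : ℝ)
    (h2 : ∀ i, l ≠ (σ i)^2) (hsum : ∑ i, ((σ i)^2 - l)⁻¹ ≠ 0)
    (X : Matrix (Fin n) (Fin n) ℝ)
    (hX : ((Matrix.diagonal σ)⁻¹ * X).trace = 0) :
    X - l • ((Matrix.diagonal σ)⁻¹ * Xᵀ * (Matrix.diagonal σ)⁻¹)
      ≠ (Matrix.diagonal σ)⁻¹ :=
  stmt_17_general n σ hσ l hsum X hX
end

section
/- Let a ∈ ℝ^n with a_i ≥ 0 for all i, and let p ∈ ℝ^n with p_i > 0 for all i and ∏ᵢ p_i = 1. Then the function t ↦ ∏_{i=1}^n (a_i + t·p_i⁻¹) is strictly monotone increasing on [t_min, ∞), where t_min = max_i(−a_i p_i), it equals 0 at t = t_min, and tends to +∞ as t → ∞; consequently there is a unique t* ≥ t_min with ∏ᵢ(a_i + t*·p_i⁻¹) = 1. Moreover t* ≤ 0 if ∏ᵢ a_i ≥ 1, and 0 ≤ t* ≤ 1 − (∏ᵢ a_i)^{1/n} if ∏ᵢ a_i ≤ 1. -/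
/-!
For `t` above the largest root `t_min = maxᵢ (-aᵢ pᵢ)` every factor `aᵢ + t pᵢ⁻¹` is nonnegative
and strictly increasing in `t`, so the product is strictly increasing there; it vanishes at
`t_min` and grows like `tⁿ`, so it takes the value `1` exactly once, at `t*`. Comparing with the
value `∏ aᵢ` at `t = 0` gives the sign of `t*`. For the upper bound, superadditivity of the
geometric mean (a consequence of AM-GM) gives
`(∏ aᵢ)^{1/n} + t* = (∏ aᵢ)^{1/n} + (∏ t* pᵢ⁻¹)^{1/n} ≤ (∏ (aᵢ + t* pᵢ⁻¹))^{1/n} = 1`.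
-/

open Filter Set

namespace Finset

variable {ι : Type*}

theorem prod_lt_prod_of_nonneg_of_nonempty {s : Finset ι} {f g : ι → ℝ}
    (hf : ∀ i ∈ s, 0 ≤ f i) (hfg : ∀ i ∈ s, f i < g i) (hs : s.Nonempty) :
    ∏ i ∈ s, f i < ∏ i ∈ s, g i := by
  by_cases hpos : ∀ i ∈ s, 0 < f i
  · exact prod_lt_prod_of_nonempty hpos hfg hs
  push Not at hpos
  obtain ⟨i, hi, hfi⟩ := hpos
  rw [prod_eq_zero hi (le_antisymm hfi (hf i hi))]
  exact prod_pos fun j hj => (hf j hj).trans_lt (hfg j hj)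

end Finset

namespace Real

variable {ι : Type*}

open Finset in
theorem geom_mean_weighted_add_le (s : Finset ι) (w x y : ι → ℝ) (hw : ∀ i ∈ s, 0 < w i)
    (hw' : ∑ i ∈ s, w i = 1) (hx : ∀ i ∈ s, 0 ≤ x i) (hy : ∀ i ∈ s, 0 ≤ y i) :
    ∏ i ∈ s, x i ^ w i + ∏ i ∈ s, y i ^ w i ≤ ∏ i ∈ s, (x i + y i) ^ w i := by
  by_cases hzero : ∃ i ∈ s, x i + y i = 0
  · obtain ⟨i, hi, hxy⟩ := hzero
    have hxi : x i = 0 := by linarith [hx i hi, hy i hi]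
    have hyi : y i = 0 := by linarith [hx i hi, hy i hi]
    have hwi : w i ≠ 0 := (hw i hi).ne'
    rw [prod_eq_zero hi (by rw [hxi, zero_rpow hwi]), prod_eq_zero hi (by rw [hyi, zero_rpow hwi]),
      add_zero]
    exact prod_nonneg fun j hj => rpow_nonneg (add_nonneg (hx j hj) (hy j hj)) _
  push Not at hzero
  have hxy : ∀ i ∈ s, 0 < x i + y i := fun i hi =>
    (add_nonneg (hx i hi) (hy i hi)).lt_of_ne' (hzero i hi)
  -- Normalising by `x + y` and applying AM-GM bounds each term by its share of the weights.
  have amgm : ∀ z : ι → ℝ, (∀ i ∈ s, 0 ≤ z i) →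
      ∏ i ∈ s, z i ^ w i ≤ (∑ i ∈ s, w i * (z i / (x i + y i))) * ∏ i ∈ s, (x i + y i) ^ w i := by
    intro z hz
    have hzq : ∀ i ∈ s, 0 ≤ z i / (x i + y i) := fun i hi => div_nonneg (hz i hi) (hxy i hi).le
    calc ∏ i ∈ s, z i ^ w i
        = (∏ i ∈ s, (z i / (x i + y i)) ^ w i) * ∏ i ∈ s, (x i + y i) ^ w i := by
          rw [← prod_mul_distrib]
          refine prod_congr rfl fun i hi => ?_
          rw [← mul_rpow (hzq i hi) (hxy i hi).le, div_mul_cancel₀ _ (hxy i hi).ne']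
      _ ≤ (∑ i ∈ s, w i * (z i / (x i + y i))) * ∏ i ∈ s, (x i + y i) ^ w i := by
          gcongr
          · exact prod_nonneg fun i hi => rpow_nonneg (hxy i hi).le _
          · exact geom_mean_le_arith_mean_weighted s w _ (fun i hi => (hw i hi).le) hw' hzq
  have hshares : ∑ i ∈ s, w i * (x i / (x i + y i)) + ∑ i ∈ s, w i * (y i / (x i + y i)) = 1 := by
    rw [← sum_add_distrib, ← hw']
    refine sum_congr rfl fun i hi => ?_
    rw [← mul_add, ← add_div, div_self (hxy i hi).ne', mul_one]
  calc ∏ i ∈ s, x i ^ w i + ∏ i ∈ s, y i ^ w i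
      ≤ (∑ i ∈ s, w i * (x i / (x i + y i)) + ∑ i ∈ s, w i * (y i / (x i + y i))) *
          ∏ i ∈ s, (x i + y i) ^ w i := by
        rw [add_mul]; exact add_le_add (amgm x hx) (amgm y hy)
    _ = ∏ i ∈ s, (x i + y i) ^ w i := by rw [hshares, one_mul]

variable [Fintype ι] [Nonempty ι]

theorem prod_rpow_one_div_card_add_le (x y : ι → ℝ) (hx : ∀ i, 0 ≤ x i) (hy : ∀ i, 0 ≤ y i) :
    (∏ i, x i) ^ ((1 : ℝ) / Fintype.card ι) + (∏ i, y i) ^ ((1 : ℝ) / Fintype.card ι) ≤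
      (∏ i, (x i + y i)) ^ ((1 : ℝ) / Fintype.card ι) := by
  have hcard : (0 : ℝ) < Fintype.card ι := Nat.cast_pos.2 Fintype.card_pos
  rw [← finsetProd_rpow _ _ fun i _ => hx i, ← finsetProd_rpow _ _ fun i _ => hy i,
    ← finsetProd_rpow _ _ fun i _ => add_nonneg (hx i) (hy i)]
  refine geom_mean_weighted_add_le _ _ _ _ (fun _ _ => by positivity) ?_
    (fun i _ => hx i) (fun i _ => hy i)
  rw [Finset.sum_const, Finset.card_univ, nsmul_eq_mul]
  field_simp

end Real

section ProdAddMul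

variable {ι : Type*} [Fintype ι] [Nonempty ι] (a q : ι → ℝ)

theorem strictMonoOn_prod_add_mul {t₀ : ℝ} (hq : ∀ i, 0 < q i) (h₀ : ∀ i, 0 ≤ a i + t₀ * q i) :
    StrictMonoOn (fun t => ∏ i, (a i + t * q i)) (Ici t₀) := by
  intro s hs t _ hst
  refine Finset.prod_lt_prod_of_nonneg_of_nonempty (fun i _ => ?_) (fun i _ => ?_)
    Finset.univ_nonempty
  · nlinarith [h₀ i, hq i, mem_Ici.1 hs]
  · nlinarith [hq i]

theorem tendsto_prod_add_mul_atTop (ha : ∀ i, 0 ≤ a i) (hq : ∀ i, 0 < q i) :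
    Tendsto (fun t => ∏ i, (a i + t * q i)) atTop atTop := by
  have hpow : Tendsto (fun t : ℝ => t ^ Fintype.card ι * ∏ i, q i) atTop atTop :=
    (tendsto_pow_atTop Fintype.card_ne_zero).atTop_mul_const (Finset.prod_pos fun i _ => hq i)
  refine tendsto_atTop_mono' _ ?_ hpow
  filter_upwards [eventually_ge_atTop 0] with t ht
  rw [← Finset.card_univ, Finset.pow_card_mul_prod]
  exact Finset.prod_le_prod (fun i _ => mul_nonneg ht (hq i).le) fun i _ =>
    le_add_of_nonneg_left (ha i)

theorem prod_rpow_one_div_card_add_le_prod_add_mul (ha : ∀ i, 0 ≤ a i) (hq : ∀ i, 0 < q i)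
    (hq' : ∏ i, q i = 1) {t : ℝ} (ht : 0 ≤ t) :
    (∏ i, a i) ^ ((1 : ℝ) / Fintype.card ι) + t ≤
      (∏ i, (a i + t * q i)) ^ ((1 : ℝ) / Fintype.card ι) := by
  have hroot : (∏ i, t * q i) ^ ((1 : ℝ) / Fintype.card ι) = t := by
    rw [← Finset.pow_card_mul_prod, hq', mul_one, Finset.card_univ, one_div,
      Real.pow_rpow_inv_natCast ht Fintype.card_ne_zero]
  calc (∏ i, a i) ^ ((1 : ℝ) / Fintype.card ι) + t
      = (∏ i, a i) ^ ((1 : ℝ) / Fintype.card ι) + (∏ i, t * q i) ^ ((1 : ℝ) / Fintype.card ι) := by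
        rw [hroot]
    _ ≤ _ := Real.prod_rpow_one_div_card_add_le a _ ha fun i => mul_nonneg ht (hq i).le

end ProdAddMul

theorem existsUnique_eq_of_strictMonoOn_Ici {f : ℝ → ℝ} {t₀ c : ℝ} (hf : ContinuousOn f (Ici t₀))
    (hmono : StrictMonoOn f (Ici t₀)) (htop : Tendsto f atTop atTop) (hc : f t₀ ≤ c) :
    ∃! t, t₀ ≤ t ∧ f t = c := by
  obtain ⟨t, ht, rfl⟩ := intermediate_value_Ici hf htop hc
  exact ⟨t, ⟨ht, rfl⟩, fun s hs => hmono.injOn hs.1 ht hs.2⟩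

theorem stmt_18_general (n : ℕ) (a p : Fin n → ℝ)
    (ha : ∀ i, 0 ≤ a i) (hp : ∀ i, 0 < p i) (hprod : ∏ i, p i = 1)
    (tmin : ℝ) (htmin : IsGreatest {t : ℝ | ∃ i : Fin n, t = -(a i * p i)} tmin) :
    StrictMonoOn (fun t : ℝ => ∏ i, (a i + t * (p i)⁻¹)) (Set.Ici tmin) ∧
    (∏ i, (a i + tmin * (p i)⁻¹)) = 0 ∧
    Filter.Tendsto (fun t : ℝ => ∏ i, (a i + t * (p i)⁻¹)) Filter.atTop Filter.atTop ∧
    (∃! t : ℝ, tmin ≤ t ∧ ∏ i, (a i + t * (p i)⁻¹) = 1) ∧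
    (∀ t : ℝ, tmin ≤ t → ∏ i, (a i + t * (p i)⁻¹) = 1 →
      (1 ≤ ∏ i, a i → t ≤ 0) ∧
      ((∏ i, a i) ≤ 1 → 0 ≤ t ∧ t ≤ 1 - (∏ i, a i) ^ ((1 : ℝ)/n))) := by
  obtain ⟨⟨i₀, rfl⟩, hmax⟩ := htmin
  have : Nonempty (Fin n) := ⟨i₀⟩
  have hq : ∀ i, 0 < (p i)⁻¹ := fun i => inv_pos.2 (hp i)
  have hq' : ∏ i, (p i)⁻¹ = 1 := by rw [Finset.prod_inv_distrib, hprod, inv_one]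
  have hfactor : ∀ i j, a i + -(a j * p j) * (p i)⁻¹ = (a i * p i - a j * p j) * (p i)⁻¹ := by
    intro i j; field_simp [(hp i).ne']; ring
  have hnonneg : ∀ i, 0 ≤ a i + -(a i₀ * p i₀) * (p i)⁻¹ := fun i => by
    rw [hfactor]; exact mul_nonneg (by linarith [hmax ⟨i, rfl⟩]) (hq i).le
  have hzero : ∏ i, (a i + -(a i₀ * p i₀) * (p i)⁻¹) = 0 :=
    Finset.prod_eq_zero (Finset.mem_univ i₀) (by rw [hfactor, sub_self, zero_mul])
  have hmono := strictMonoOn_prod_add_mul a _ hq hnonneg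
  have htop := tendsto_prod_add_mul_atTop a _ ha hq
  have hcont : ContinuousOn (fun t : ℝ => ∏ i, (a i + t * (p i)⁻¹)) (Ici (-(a i₀ * p i₀))) := by
    fun_prop
  have h0 : (0 : ℝ) ∈ Ici (-(a i₀ * p i₀)) := by
    simp only [mem_Ici, neg_nonpos]; exact mul_nonneg (ha i₀) (hp i₀).le
  refine ⟨hmono, hzero, htop, existsUnique_eq_of_strictMonoOn_Ici hcont hmono htop
    (hzero.trans_le zero_le_one),
    fun t ht h1 => ⟨fun hge => ?_, fun hle => ?_⟩⟩
  · exact (hmono.le_iff_le ht h0).1 (by simpa [h1] using hge)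
  · have ht0 : 0 ≤ t := (hmono.le_iff_le h0 ht).1 (by simpa [h1] using hle)
    have hbound := prod_rpow_one_div_card_add_le_prod_add_mul a _ ha hq hq' ht0
    rw [h1, Real.one_rpow, Fintype.card_fin] at hbound
    exact ⟨ht0, by linarith⟩

theorem stmt_18 (n : ℕ) (hn : 2 ≤ n) (a p : Fin n → ℝ)
    (ha : ∀ i, 0 ≤ a i) (hp : ∀ i, 0 < p i) (hprod : ∏ i, p i = 1)
    (tmin : ℝ) (htmin : IsGreatest {t : ℝ | ∃ i : Fin n, t = -(a i * p i)} tmin) :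
    StrictMonoOn (fun t : ℝ => ∏ i, (a i + t * (p i)⁻¹)) (Set.Ici tmin) ∧
    (∏ i, (a i + tmin * (p i)⁻¹)) = 0 ∧
    Filter.Tendsto (fun t : ℝ => ∏ i, (a i + t * (p i)⁻¹)) Filter.atTop Filter.atTop ∧
    (∃! t : ℝ, tmin ≤ t ∧ ∏ i, (a i + t * (p i)⁻¹) = 1) ∧
    (∀ t : ℝ, tmin ≤ t → ∏ i, (a i + t * (p i)⁻¹) = 1 →
      (1 ≤ ∏ i, a i → t ≤ 0) ∧
      ((∏ i, a i) ≤ 1 → 0 ≤ t ∧ t ≤ 1 - (∏ i, a i) ^ ((1 : ℝ)/n))) :=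
  stmt_18_general n a p ha hp hprod tmin htmin
end
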